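/- arXiv:2308.04390 — 3 statements merged into one kernel-verified Lean document; each statement's English description precedes it below -/
import Mathlib

section
/- The burning number of the path P_n on n vertices is ⌈√n⌉. -/
/-- `G` can be burned in `b` steps: `V(G)` is covered by balls of radii `0, 1, ..., b-1`. -/
def burnable {V : Type*} (G : SimpleGraph V) (b : ℕ) : Prop :=
  ∃ c : Fin b → V, ∀ v, ∃ i : Fin b, G.dist (c i) v ≤ (i : ℕ)

/-- The burning number of `G`. -/
noncomputable def burningNumber {V : Type*} (G : SimpleGraph V) : ℕ :=
  sInf {b | burnable G b}

open SimpleGraph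




/-- Any walk in the path graph has length at least the natural distance of endpoints. -/
lemma walk_length_ge {n : ℕ} {u v : Fin n} (p : (pathGraph n).Walk u v) :
    Nat.dist u.val v.val ≤ p.length := by
  induction p with
  | nil => simp [Nat.dist_self]
  | cons h p ih =>
    rename_i a b c
    have h2 := (pathGraph_adj).mp h
    have : Nat.dist a.val b.val = 1 := by
      rcases h2 with h2 | h2 <;> simp [Nat.dist] <;> omega
    calc Nat.dist a.val c.val ≤ Nat.dist a.val b.val + Nat.dist b.val c.val :=
          Nat.dist.triangle_inequality _ _ _
      _ ≤ 1 + p.length := by omega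
      _ = (SimpleGraph.Walk.cons h p).length := by simp [Nat.add_comm]

lemma exists_walk_le {n : ℕ} (k : ℕ) (u v : Fin n) (h : v.val = u.val + k) :
    ∃ p : (pathGraph n).Walk u v, p.length = k := by
  induction k generalizing u with
  | zero =>
    have : u = v := Fin.ext (by omega)
    subst this; exact ⟨SimpleGraph.Walk.nil, rfl⟩
  | succ k ih =>
    have hu1 : u.val + 1 < n := by have := v.isLt; omega
    set u' : Fin n := ⟨u.val + 1, hu1⟩ with hu'
    have hadj : (pathGraph n).Adj u u' := by rw [pathGraph_adj]; left; rfl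
    obtain ⟨p, hp⟩ := ih u' (by simp [hu']; omega)
    exact ⟨SimpleGraph.Walk.cons hadj p, by simp [hp]⟩

lemma pathGraph_dist {n : ℕ} (u v : Fin n) :
    (pathGraph n).dist u v = Nat.dist u.val v.val := by
  apply le_antisymm
  · rcases le_total u.val v.val with h | h
    · obtain ⟨p, hp⟩ := exists_walk_le (v.val - u.val) u v (by omega)
      calc (pathGraph n).dist u v ≤ p.length := SimpleGraph.dist_le p
        _ = Nat.dist u.val v.val := by rw [hp]; simp [Nat.dist]; omega
    · obtain ⟨p, hp⟩ := exists_walk_le (u.val - v.val) v u (by omega)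
      rw [SimpleGraph.dist_comm]
      calc (pathGraph n).dist v u ≤ p.length := SimpleGraph.dist_le p
        _ = Nat.dist u.val v.val := by rw [hp]; simp [Nat.dist]; omega
  · by_cases hd : (pathGraph n).dist u v = 0
    · rw [hd]
      have : u = v := by
        have hr : (pathGraph n).Reachable u v := pathGraph_preconnected n u v
        exact (hr.dist_eq_zero_iff).mp hd
      simp [this, Nat.dist_self]
    · obtain ⟨p, hp⟩ := SimpleGraph.exists_walk_of_dist_ne_zero hd
      rw [← hp]; exact walk_length_ge p

lemma sum_odd (b : ℕ) : ∑ i ∈ Finset.range b, (2 * i + 1) = b * b := by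
  induction b with
  | zero => simp
  | succ b ih => rw [Finset.sum_range_succ, ih]; ring

/-- Lower bound: burnable in b steps implies n ≤ b². -/
lemma burnable_sq {n b : ℕ} (h : burnable (SimpleGraph.pathGraph n) b) : n ≤ b * b := by
  obtain ⟨c, hc⟩ := h
  classical
  have hsub : (Finset.univ : Finset (Fin n)) ⊆
      Finset.univ.biUnion (fun i : Fin b =>
        Finset.univ.filter (fun v : Fin n => Nat.dist (c i).val v.val ≤ (i : ℕ))) := by
    intro v _
    obtain ⟨i, hi⟩ := hc v
    rw [pathGraph_dist] at hi
    exact Finset.mem_biUnion.mpr ⟨i, Finset.mem_univ i, by simpa using hi⟩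
  have hcard : ∀ i : Fin b,
      (Finset.univ.filter (fun v : Fin n => Nat.dist (c i).val v.val ≤ (i : ℕ))).card
        ≤ 2 * (i : ℕ) + 1 := by
    intro i
    have hinj : ∀ v ∈ Finset.univ.filter
        (fun v : Fin n => Nat.dist (c i).val v.val ≤ (i : ℕ)),
        v.val ∈ Finset.Icc ((c i).val - (i : ℕ)) ((c i).val + (i : ℕ)) := by
      intro v hv
      simp only [Finset.mem_filter, Finset.mem_univ, true_and] at hv
      simp only [Finset.mem_Icc]
      simp [Nat.dist] at hv; omega
    calc (Finset.univ.filter (fun v : Fin n => Nat.dist (c i).val v.val ≤ (i : ℕ))).card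
        ≤ (Finset.Icc ((c i).val - (i : ℕ)) ((c i).val + (i : ℕ))).card :=
          Finset.card_le_card_of_injOn (fun v => v.val) hinj
            (fun a _ b _ hab => Fin.ext hab)
      _ ≤ 2 * (i : ℕ) + 1 := by rw [Nat.card_Icc]; omega
  calc n = (Finset.univ : Finset (Fin n)).card := by simp
    _ ≤ _ := Finset.card_le_card hsub
    _ ≤ ∑ i : Fin b, (2 * (i : ℕ) + 1) :=
        Finset.card_biUnion_le.trans (Finset.sum_le_sum (fun i _ => hcard i))
    _ = ∑ i ∈ Finset.range b, (2 * i + 1) := by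
        rw [← Fin.sum_univ_eq_sum_range]
    _ = b * b := sum_odd b

/-- Upper bound: if n ≤ b², the path on n vertices is burnable in b steps. -/
lemma burnable_of_sq {n b : ℕ} (h : n ≤ b * b) (h0 : n = 0 → b = 0) :
    burnable (SimpleGraph.pathGraph n) b := by
  rcases Nat.eq_zero_or_pos n with hn | hn
  · subst hn
    rw [h0 rfl]
    exact ⟨Fin.elim0, fun v => v.elim0⟩
  · refine ⟨fun i => ⟨min ((i : ℕ) * i + i) (n - 1), by omega⟩, fun v => ?_⟩
    set k := Nat.sqrt v.val with hk
    have hk1 : k * k ≤ v.val := by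
      have := Nat.sqrt_le' v.val; rwa [Nat.pow_two] at this
    have hk2 : v.val ≤ k * k + 2 * k := by
      have h' : v.val < (k + 1) * (k + 1) := by
        have := Nat.lt_succ_sqrt' v.val
        rwa [Nat.pow_two, Nat.succ_eq_add_one] at this
      have hexp : (k + 1) * (k + 1) = k * k + 2 * k + 1 := by ring
      omega
    have hkb : k < b := Nat.sqrt_lt.mpr (lt_of_lt_of_le v.isLt h)
    refine ⟨⟨k, hkb⟩, ?_⟩
    rw [pathGraph_dist]
    have hv : v.val ≤ n - 1 := by omega
    simp only [Nat.dist]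
    omega

/-- the burning number of the path on `n` vertices is `⌈√n⌉`. -/
theorem stmt_13 (n : ℕ) :
    burningNumber (SimpleGraph.pathGraph n) = ⌈Real.sqrt n⌉₊ := by
  have key : ∀ b : ℕ, ⌈Real.sqrt n⌉₊ ≤ b ↔ n ≤ b * b := by
    intro b
    rw [Nat.ceil_le]
    constructor
    · intro hb
      have h2 : (n : ℝ) ≤ (b : ℝ) * b := by
        have := Real.sqrt_le_sqrt (le_of_eq (rfl : (n:ℝ) = n))
        nlinarith [Real.sq_sqrt (Nat.cast_nonneg n : (0:ℝ) ≤ n),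
          Real.sqrt_nonneg (n : ℝ)]
      exact_mod_cast h2
    · intro hb
      have : (n : ℝ) ≤ (b : ℝ) * b := by exact_mod_cast hb
      calc Real.sqrt n ≤ Real.sqrt ((b : ℝ) * b) := Real.sqrt_le_sqrt this
        _ = b := by rw [show ((b:ℝ) * b) = (b:ℝ)^2 by ring, Real.sqrt_sq (by positivity)]
  have h0 : n = 0 → ⌈Real.sqrt n⌉₊ = 0 := by intro h; subst h; simp
  apply le_antisymm
  · apply Nat.sInf_le
    exact burnable_of_sq ((key _).mp le_rfl) h0
  · exact le_csInf ⟨⌈Real.sqrt n⌉₊, burnable_of_sq ((key _).mp le_rfl) h0⟩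
      (fun x hx => (key x).mpr (burnable_sq hx))
end

section
/- For any tree T rooted at r and vertex v with children w_1,...,w_ℓ, and any k ≥ 1: the set of covers of subgraphs of the form D(v) \ A, where A is empty or a connected subgraph containing v consisting of vertices at distance < k from v within D(v), equals C_0(v) ∪ (C_{k-1}(w_1) + ... + C_{k-1}(w_ℓ)), where C_0(v) is the set of covers of all of D(v), and sumset of sets of multisets means all multiset unions of one element from each set. -/
/-- The descendants `D(v)` of `v` in the tree `G` rooted at `root`: the vertices whose
path to the root passes through `v` (including `v` itself). -/
def desc {V : Type*} (G : SimpleGraph V) (root v : V) : Set V :=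
  {u | ∀ p : G.Walk u root, v ∈ p.support}

/-- A multiset `R` of non-negative integers is a cover of the vertex set `S` if `S` can be
partitioned into connected vertex sets whose radii are bounded by the elements of `R`. -/
def coverOf {V : Type*} (G : SimpleGraph V) (S : Set V) (R : Multiset ℕ) : Prop :=
  ∃ (k : ℕ) (r : Fin k → ℕ) (A : Fin k → Set V),
    R = Finset.univ.val.map r ∧ (⋃ i, A i) = S ∧
    (Pairwise fun i j => Disjoint (A i) (A j)) ∧
    ∀ i, (G.induce (A i)).Connected ∧
      ∃ c ∈ A i, ∀ u ∈ A i, G.dist c u ≤ r i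

/-- `Ck G root k v` is the set of covers of subgraphs `D(v) \ A`, where `A` is either empty
or a connected vertex set containing `v` consisting of vertices of `D(v)` at distance `< k`
from `v`. In particular `Ck G root 0 v` is the set of covers of all of `D(v)`. -/
def Ck {V : Type*} (G : SimpleGraph V) (root : V) (k : ℕ) (v : V) : Set (Multiset ℕ) :=
  {R | ∃ A : Set V,
    (A = ∅ ∨ (v ∈ A ∧ A ⊆ desc G root v ∧ (G.induce A).Connected ∧
        ∀ u ∈ A, G.dist v u < k)) ∧
    coverOf G (desc G root v \ A) R}

section TreeLemmas

open SimpleGraph Walk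

variable {V : Type*} [DecidableEq V] {G : SimpleGraph V} (hG : G.IsTree) {root : V}

noncomputable def tp (hG : G.IsTree) (u v : V) : G.Walk u v :=
  (hG.existsUnique_path u v).exists.choose

lemma tp_isPath (u v : V) : (tp hG u v).IsPath :=
  (hG.existsUnique_path u v).exists.choose_spec

lemma tp_unique {u v : V} {p : G.Walk u v} (hp : p.IsPath) : p = tp hG u v :=
  ((hG.existsUnique_path u v).unique hp (tp_isPath hG u v))

lemma mem_desc_iff {u v : V} : u ∈ desc G root v ↔ v ∈ (tp hG u root).support := by
  constructor
  · exact fun h => h _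
  · intro h p
    have hb : p.bypass = tp hG u root := tp_unique hG p.bypass_isPath
    exact p.support_bypass_subset (hb ▸ h)

lemma mem_desc_self (v : V) : v ∈ desc G root v := fun p => p.start_mem_support

lemma desc_trans {u c v : V} (h1 : u ∈ desc G root c) (h2 : c ∈ desc G root v) :
    u ∈ desc G root v := by
  intro p
  have hc : c ∈ p.support := h1 p
  have := h2 (p.dropUntil c hc)
  exact p.support_dropUntil_subset hc this

lemma dist_eq_tp_length (u v : V) : G.dist u v = (tp hG u v).length := by
  obtain ⟨p, hp, hl⟩ := (hG.isConnected.preconnected u v).exists_path_of_dist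
  rw [← hl, tp_unique hG hp]

set_option linter.unusedSectionVars false
include hG

lemma desc_antisymm {u v : V} (h1 : u ∈ desc G root v) (h2 : v ∈ desc G root u) : u = v := by
  by_contra hne
  set p := tp hG u root with hp
  have hv : v ∈ p.support := (mem_desc_iff hG).1 h1
  have hpath : p.IsPath := tp_isPath hG u root
  have hq : (p.dropUntil v hv) = tp hG v root := tp_unique hG (hpath.dropUntil hv)
  have hu : u ∈ (p.dropUntil v hv).support := by
    rw [hq]; exact (mem_desc_iff hG).1 h2
  have hu' : u ∈ (p.dropUntil v hv).support.tail := by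
    rw [(p.dropUntil v hv).support_eq_cons] at hu
    rw [List.mem_cons] at hu
    rcases hu with h | h
    · exact absurd h hne
    · exact h
  have hnd := hpath.support_nodup
  rw [← p.take_spec hv, support_append, List.nodup_append] at hnd
  exact hnd.2.2 _ ((p.takeUntil v hv).start_mem_support) _ hu' rfl

lemma tp_child {c v : V} (hadj : G.Adj c v) (hc : c ∈ desc G root v) :
    tp hG c root = Walk.cons hadj (tp hG v root) := by
  have hns : c ∉ (tp hG v root).support := by
    intro h
    exact hadj.ne (desc_antisymm hG hc ((mem_desc_iff hG).2 h))
  exact (tp_unique hG ((tp_isPath hG v root).cons hns)).symm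

lemma v_not_mem_child {c v : V} (hadj : G.Adj c v) (hc : c ∈ desc G root v) :
    v ∉ desc G root c := fun h => hadj.ne (desc_antisymm hG hc h)

lemma exists_child {u v : V} (hu : u ∈ desc G root v) (hne : u ≠ v) :
    ∃ c, G.Adj c v ∧ c ∈ desc G root v ∧ u ∈ desc G root c := by
  obtain ⟨n, hn⟩ : ∃ n, (tp hG u root).length ≤ n := ⟨_, le_rfl⟩
  induction n generalizing u with
  | zero =>
    have hroot : u = root := Walk.eq_of_length_eq_zero (Nat.le_zero.mp hn)
    subst hroot
    have hnil : (Walk.nil : G.Walk u u) = tp hG u u := tp_unique hG Walk.IsPath.nil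
    have hv := (mem_desc_iff hG).1 hu
    rw [← hnil] at hv
    simp at hv
    exact absurd hv.symm hne
  | succ n ih =>
    rcases eq_or_ne u root with rfl | hur
    · have hnil : (Walk.nil : G.Walk u u) = tp hG u u := tp_unique hG Walk.IsPath.nil
      have hv := (mem_desc_iff hG).1 hu
      rw [← hnil] at hv
      simp at hv
      exact absurd hv.symm hne
    · obtain ⟨x, h, q, hpq⟩ := Walk.exists_eq_cons_of_ne hur (tp hG u root)
      have hq : q = tp hG x root := by
        have := tp_isPath hG u root
        rw [hpq] at this
        exact tp_unique hG this.of_cons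
      have hux : u ∈ desc G root x := by
        apply (mem_desc_iff hG).2
        rw [hpq, Walk.support_cons]
        exact List.mem_cons_of_mem _ (hq ▸ q.start_mem_support)
      have hv := (mem_desc_iff hG).1 hu
      rw [hpq, Walk.support_cons] at hv
      rcases List.mem_cons.mp hv with h1 | h1
      · exact absurd h1.symm hne
      · have hx : x ∈ desc G root v := (mem_desc_iff hG).2 (hq ▸ h1)
        rcases eq_or_ne x v with rfl | hxv
        · exact ⟨u, h, hu, mem_desc_self u⟩
        · have hlen : (tp hG x root).length ≤ n := by
            have : (tp hG u root).length = q.length + 1 := by rw [hpq]; simp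
            rw [← hq]; omega
          obtain ⟨c, hc1, hc2, hc3⟩ := ih hx hxv hlen
          exact ⟨c, hc1, hc2, desc_trans hux hc3⟩

lemma boundary {c v a b : V} (hadj : G.Adj c v) (hc : c ∈ desc G root v)
    (ha : a ∈ desc G root c) (hb : b ∉ desc G root c) (hab : G.Adj a b) :
    a = c ∧ b = v := by
  have hba : b ∉ desc G root a := fun h => hb (desc_trans h ha)
  have hanb : a ∉ (tp hG b root).support := fun h => hba ((mem_desc_iff hG).2 h)
  have hcons : (Walk.cons hab (tp hG b root)).IsPath := (tp_isPath hG b root).cons hanb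
  have htp : Walk.cons hab (tp hG b root) = tp hG a root := tp_unique hG hcons
  have hcsup : c ∈ (tp hG a root).support := (mem_desc_iff hG).1 ha
  rw [← htp, Walk.support_cons] at hcsup
  rcases List.mem_cons.mp hcsup with h1 | h1
  · subst h1
    refine ⟨rfl, ?_⟩
    have h2 : Walk.cons hab (tp hG b root) = Walk.cons hadj (tp hG v root) := by
      rw [htp, tp_child hG hadj hc]
    have h3 := congrArg Walk.support h2
    rw [Walk.support_cons, Walk.support_cons] at h3
    have h4 := List.tail_eq_of_cons_eq h3
    rw [(tp hG b root).support_eq_cons, (tp hG v root).support_eq_cons] at h4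
    exact List.head_eq_of_cons_eq h4
  · exact absurd ((mem_desc_iff hG).2 h1) hb

lemma walk_confine {c v : V} (hadj : G.Adj c v) (hc : c ∈ desc G root v)
    {x y : V} (p : G.Walk x y) (hx : x ∈ desc G root c) (hv : v ∉ p.support) :
    ∀ z ∈ p.support, z ∈ desc G root c := by
  induction p with
  | nil => intro z hz; simp at hz; subst hz; exact hx
  | @cons x m y h q ih =>
    rw [Walk.support_cons] at hv
    have hvq : v ∉ q.support := fun hh => hv (List.mem_cons_of_mem _ hh)
    by_cases hm : m ∈ desc G root c
    · intro z hz
      rcases List.mem_cons.mp hz with rfl | hz'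
      · exact hx
      · exact ih hm hvq z hz'
    · obtain ⟨_, rfl⟩ := boundary hG hadj hc hx hm h
      exact absurd (List.mem_cons_of_mem _ q.start_mem_support) hv

lemma walk_cross {c v : V} (hadj : G.Adj c v) (hc : c ∈ desc G root v)
    {x y : V} (p : G.Walk x y) (hx : x ∈ desc G root c) (hy : y ∉ desc G root c) :
    c ∈ p.support := by
  induction p with
  | nil => exact absurd hx hy
  | @cons x m y h q ih =>
    by_cases hm : m ∈ desc G root c
    · exact List.mem_cons_of_mem _ (ih hm hy)
    · obtain ⟨rfl, _⟩ := boundary hG hadj hc hx hm h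
      exact Walk.start_mem_support _

lemma v_not_mem_tp_to_child {c v u : V} (hadj : G.Adj c v) (hc : c ∈ desc G root v)
    (hu : u ∈ desc G root c) : v ∉ (tp hG u c).support := by
  intro hvt
  have hcp : c ∈ (tp hG u root).support := (mem_desc_iff hG).1 hu
  set p := tp hG u root with hp
  have htake : p.takeUntil c hcp = tp hG u c :=
    tp_unique hG ((tp_isPath hG u root).takeUntil hcp)
  have hdrop : p.dropUntil c hcp = tp hG c root :=
    tp_unique hG ((tp_isPath hG u root).dropUntil hcp)
  have hvd : v ∈ (p.dropUntil c hcp).support.tail := by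
    rw [hdrop, tp_child hG hadj hc, Walk.support_cons]
    exact (tp hG v root).start_mem_support
  have hnd : p.support.Nodup := (tp_isPath hG u root).support_nodup
  rw [← p.take_spec hcp, Walk.support_append, List.nodup_append] at hnd
  exact hnd.2.2 _ (htake ▸ hvt) _ hvd rfl

lemma dist_child {c v u : V} (hadj : G.Adj c v) (hc : c ∈ desc G root v)
    (hu : u ∈ desc G root c) : G.dist v u = G.dist c u + 1 := by
  have hvn : v ∉ (tp hG u c).support := v_not_mem_tp_to_child hG hadj hc hu
  have hq : ((tp hG u c).append (Walk.cons hadj Walk.nil)).IsPath := by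
    rw [Walk.isPath_def, Walk.support_append]
    simp only [Walk.support_cons, Walk.support_nil, List.tail_cons]
    rw [List.nodup_append]
    refine ⟨(tp_isPath hG u c).support_nodup, List.nodup_singleton v, ?_⟩
    intro a ha b hb
    rw [List.mem_singleton] at hb
    subst hb
    exact fun h => hvn (h ▸ ha)
  have htp : (tp hG u c).append (Walk.cons hadj Walk.nil) = tp hG u v := tp_unique hG hq
  have hlen : (tp hG u v).length = (tp hG u c).length + 1 := by
    rw [← htp, Walk.length_append]
    simp
  rw [G.dist_comm (u := v) (v := u), G.dist_comm (u := c) (v := u), dist_eq_tp_length hG, dist_eq_tp_length hG, hlen]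

lemma dist_lt_of_two_children {c c' v u : V} (hadj : G.Adj c v) (hc : c ∈ desc G root v)
    (hadj' : G.Adj c' v) (hc' : c' ∈ desc G root v) (hcc' : c ≠ c')
    (hu : u ∈ desc G root c) (hu' : u ∈ desc G root c') :
    G.dist u c' < G.dist u c := by
  set p := tp hG u root with hp
  have hcp : c ∈ p.support := (mem_desc_iff hG).1 hu
  have hc'p : c' ∈ p.support := (mem_desc_iff hG).1 hu'
  have hdrop : p.dropUntil c hcp = tp hG c root :=
    tp_unique hG ((tp_isPath hG u root).dropUntil hcp)
  have hcase : c' ∈ (p.takeUntil c hcp).support := by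
    have := hc'p
    rw [← p.take_spec hcp, Walk.mem_support_append_iff] at this
    rcases this with h1 | h1
    · exact h1
    · rw [hdrop, tp_child hG hadj hc, Walk.support_cons] at h1
      rcases List.mem_cons.mp h1 with h2 | h2
      · exact absurd h2 hcc'.symm
      · exact absurd (desc_antisymm hG hc' ((mem_desc_iff hG).2 h2)) hadj'.ne
  set q := p.takeUntil c hcp with hqdef
  have hqpath : q.IsPath := (tp_isPath hG u root).takeUntil hcp
  have hquc : q = tp hG u c := tp_unique hG hqpath
  have htake2 : q.takeUntil c' hcase = tp hG u c' :=
    tp_unique hG (hqpath.takeUntil hcase)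
  have hlt : (q.takeUntil c' hcase).length < q.length := by
    have hle := q.length_takeUntil_le hcase
    rcases lt_or_eq_of_le hle with h | h
    · exact h
    · exfalso
      have hspec := q.take_spec hcase
      have := congrArg Walk.length hspec
      rw [Walk.length_append] at this
      have hzero : (q.dropUntil c' hcase).length = 0 := by omega
      exact hcc' (Walk.eq_of_length_eq_zero hzero).symm
  rw [dist_eq_tp_length hG, dist_eq_tp_length hG, ← htake2, ← hquc]
  exact hlt

lemma children_disjoint {c c' v : V} (hadj : G.Adj c v) (hc : c ∈ desc G root v)
    (hadj' : G.Adj c' v) (hc' : c' ∈ desc G root v) (hcc' : c ≠ c') :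
    Disjoint (desc G root c) (desc G root c') := by
  rw [Set.disjoint_left]
  intro u hu hu'
  have h1 := dist_lt_of_two_children hG hadj hc hadj' hc' hcc' hu hu'
  have h2 := dist_lt_of_two_children hG hadj' hc' hadj hc hcc'.symm hu' hu
  omega

lemma path_avoid {c v x y : V} (hadj : G.Adj c v) (hc : c ∈ desc G root v)
    (p : G.Walk x y) (hp : p.IsPath) (hx : x ∈ desc G root c) (hy : y ∈ desc G root c) :
    v ∉ p.support := by
  intro hv
  have hvnd : v ∉ desc G root c := v_not_mem_child hG hadj hc
  have h1 : c ∈ (p.takeUntil v hv).support :=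
    walk_cross hG hadj hc _ hx hvnd
  have h2 : c ∈ (p.dropUntil v hv).support := by
    have := walk_cross hG hadj hc (p.dropUntil v hv).reverse hy hvnd
    rw [Walk.support_reverse, List.mem_reverse] at this
    exact this
  have h2' : c ∈ (p.dropUntil v hv).support.tail := by
    rw [(p.dropUntil v hv).support_eq_cons] at h2
    rcases List.mem_cons.mp h2 with h3 | h3
    · exact absurd h3 hadj.ne
    · exact h3
  have hnd := hp.support_nodup
  rw [← p.take_spec hv, Walk.support_append, List.nodup_append] at hnd
  exact hnd.2.2 _ h1 _ h2' rfl

omit hG in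
lemma reachable_of_confined {A : Set V} {x y : V} (p : G.Walk x y)
    (hp : ∀ z ∈ p.support, z ∈ A) (hx : x ∈ A) (hy : y ∈ A) :
    (G.induce A).Reachable ⟨x, hx⟩ ⟨y, hy⟩ := by
  induction p with
  | nil => rfl
  | @cons x m y h q ih =>
    have hm : m ∈ A := hp m (List.mem_cons_of_mem _ q.start_mem_support)
    have hq : ∀ z ∈ q.support, z ∈ A := fun z hz => hp z (List.mem_cons_of_mem _ hz)
    have hadj : (G.induce A).Adj ⟨x, hx⟩ ⟨m, hm⟩ := by
      simp only [SimpleGraph.comap_adj, Function.Embedding.coe_subtype]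
      exact h
    exact (hadj.reachable).trans (ih hq hm hy)

omit hG in
lemma confined_of_reachable {A : Set V} {a b : ↥A} (h : (G.induce A).Reachable a b) :
    ∃ p : G.Walk a.1 b.1, ∀ z ∈ p.support, z ∈ A := by
  obtain ⟨q⟩ := h
  let f : G.induce A →g G := ⟨Subtype.val, fun h => h⟩
  refine ⟨q.map f, ?_⟩
  intro z hz
  rw [Walk.support_map, List.mem_map] at hz
  obtain ⟨⟨z', hz'⟩, _, rfl⟩ := hz
  exact hz'

omit hG in
lemma induce_connected_iff {A : Set V} : (G.induce A).Connected ↔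
    A.Nonempty ∧ ∀ x ∈ A, ∀ y ∈ A, ∃ p : G.Walk x y, ∀ z ∈ p.support, z ∈ A := by
  constructor
  · intro h
    refine ⟨Set.nonempty_coe_sort.mp h.nonempty, fun x hx y hy => ?_⟩
    exact confined_of_reachable (h.preconnected ⟨x, hx⟩ ⟨y, hy⟩)
  · rintro ⟨hne, h⟩
    have : Nonempty ↥A := Set.nonempty_coe_sort.mpr hne
    refine SimpleGraph.Connected.mk ?_
    intro a b
    obtain ⟨p, hp⟩ := h a.1 a.2 b.1 b.2
    exact reachable_of_confined p hp a.2 b.2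

section mult


omit hG in
lemma multiset_map_equiv {α β γ: Type*} [Fintype α] [Fintype β] (e : α ≃ β) (g : β → γ) :
    (Finset.univ.val.map (fun a => g (e a))) = Finset.univ.val.map g := by
  have h : (Finset.univ : Finset α).map e.toEmbedding = Finset.univ :=
    Finset.univ_map_equiv_to_embedding e
  calc Finset.univ.val.map (fun a => g (e a))
      = (Finset.univ.val.map e).map g := by rw [Multiset.map_map]; rfl
    _ = Finset.univ.val.map g := by
        rw [show (Finset.univ.val.map ⇑e : Multiset β) = ((Finset.univ : Finset α).map e.toEmbedding).val from rfl, h]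

omit hG in
lemma multiset_sigma_sum {ℓ : ℕ} {κ : Fin ℓ → Type*} [∀ j, Fintype (κ j)] (g : (Σ j, κ j) → ℕ) :
    ((Finset.univ.val.map g) : Multiset ℕ) = ∑ j, (Finset.univ.val.map fun i => g ⟨j, i⟩) := by
  rw [← Finset.univ_sigma_univ]
  show Multiset.map g (Multiset.sigma Finset.univ.val fun _ => Finset.univ.val) = _
  rw [Multiset.sigma, Multiset.map_bind, Finset.sum_eq_multiset_sum, Multiset.bind,
    Multiset.join]
  congr 1
  apply Multiset.map_congr rfl
  intro j _
  rw [Multiset.map_map]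
  rfl

end mult

omit hG in
lemma coverOf_iff {S : Set V} {R : Multiset ℕ} :
    coverOf G S R ↔ ∃ (ι : Type) (_ : Fintype ι) (r : ι → ℕ) (A : ι → Set V),
      R = Finset.univ.val.map r ∧ (⋃ i, A i) = S ∧
      (Pairwise fun i j => Disjoint (A i) (A j)) ∧
      ∀ i, (G.induce (A i)).Connected ∧ ∃ c ∈ A i, ∀ u ∈ A i, G.dist c u ≤ r i := by
  constructor
  · rintro ⟨k, r, A, h⟩
    exact ⟨Fin k, inferInstance, r, A, h⟩
  · rintro ⟨ι, hft, r, A, hR, hU, hP, hC⟩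
    letI := hft
    set e := (Fintype.equivFin ι).symm with he
    refine ⟨Fintype.card ι, fun i => r (e i), fun i => A (e i), ?_, ?_, ?_, fun i => hC _⟩
    · rw [hR]
      exact (multiset_map_equiv e r).symm
    · rw [← hU]
      ext x
      simp only [Set.mem_iUnion]
      constructor
      · rintro ⟨i, h⟩; exact ⟨_, h⟩
      · rintro ⟨i, h⟩; exact ⟨Fintype.equivFin ι i, by simpa [he] using h⟩
    · intro i j hij
      exact hP (e.injective.ne hij)

omit hG in
lemma coverOf_combine {ℓ : ℕ} {P : Fin ℓ → Set V} {f : Fin ℓ → Multiset ℕ}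
    (hdisj : Pairwise fun i j => Disjoint (P i) (P j))
    (h : ∀ j, coverOf G (P j) (f j)) : coverOf G (⋃ j, P j) (∑ j, f j) := by
  choose k r A hR hU hP hC using h
  rw [coverOf_iff]
  refine ⟨(Σ j, Fin (k j)), inferInstance, fun x => r x.1 x.2, fun x => A x.1 x.2,
    ?_, ?_, ?_, fun x => hC x.1 x.2⟩
  · rw [multiset_sigma_sum]
    exact Finset.sum_congr rfl fun j _ => hR j
  · ext x
    simp only [Set.mem_iUnion, Sigma.exists]
    constructor
    · rintro ⟨j, i, hx⟩
      exact ⟨j, (hU j) ▸ Set.mem_iUnion.2 ⟨i, hx⟩⟩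
    · rintro ⟨j, hx⟩
      rw [← hU j] at hx
      obtain ⟨i, hx⟩ := Set.mem_iUnion.1 hx
      exact ⟨j, i, hx⟩
  · rintro ⟨j, i⟩ ⟨j', i'⟩ hne
    rcases eq_or_ne j j' with rfl | hjj
    · have hii : i ≠ i' := fun h => hne (by rw [h])
      exact hP j hii
    · have h1 : A j i ⊆ P j := (hU j) ▸ Set.subset_iUnion _ i
      have h2 : A j' i' ⊆ P j' := (hU j') ▸ Set.subset_iUnion _ i'
      exact Set.disjoint_of_subset h1 h2 (hdisj hjj)

omit hG in
lemma coverOf_split {ℓ : ℕ} {P : Fin ℓ → Set V} {S : Set V} {R : Multiset ℕ}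
    (hcov : coverOf G S R) (hS : S = ⋃ j, P j)
    (hdisj : Pairwise fun i j => Disjoint (P i) (P j))
    (hloc : ∀ B : Set V, B ⊆ S → B.Nonempty → (G.induce B).Connected → ∃ j, B ⊆ P j) :
    ∃ f : Fin ℓ → Multiset ℕ, (∀ j, coverOf G (P j) (f j)) ∧ R = ∑ j, f j := by
  obtain ⟨k, r, A, hR, hU, hP, hC⟩ := hcov
  have hAS : ∀ i, A i ⊆ S := fun i => hU ▸ Set.subset_iUnion _ i
  have hAne : ∀ i, (A i).Nonempty := fun i =>
    Set.nonempty_coe_sort.mp (hC i).1.nonempty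
  choose c hc using fun i => hloc (A i) (hAS i) (hAne i) (hC i).1
  classical
  refine ⟨fun j => (Finset.univ : Finset {i // c i = j}).val.map (fun i => r i.1), ?_, ?_⟩
  · intro j
    rw [coverOf_iff]
    refine ⟨{i // c i = j}, inferInstance, fun i => r i.1, fun i => A i.1, rfl, ?_, ?_,
      fun i => hC i.1⟩
    · ext x
      simp only [Set.mem_iUnion, Subtype.exists]
      constructor
      · rintro ⟨i, rfl, hx⟩
        exact hc i hx
      · intro hx
        have hxS : x ∈ S := hS ▸ Set.mem_iUnion.2 ⟨j, hx⟩
        rw [← hU] at hxS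
        obtain ⟨i, hi⟩ := Set.mem_iUnion.1 hxS
        have hcij : c i = j := by
          by_contra hne
          exact Set.disjoint_left.1 (hdisj hne) (hc i hi) hx
        exact ⟨i, hcij, hi⟩
    · intro i i' hne
      exact hP (fun h => hne (Subtype.ext h))
  · have he := multiset_map_equiv (Equiv.sigmaFiberEquiv c) r
    rw [hR, ← he, multiset_sigma_sum]
    rfl


end TreeLemmas

open SimpleGraph

/-- the dynamic programming recurrence. If `w 0, ..., w (ℓ-1)` enumerate the
children of `v` in the tree `G` rooted at `root`, then for `k ≥ 1`, `Cₖ(v)` equals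
`C₀(v) ∪ (C_{k-1}(w 0) + ... + C_{k-1}(w (ℓ-1)))`, where the sumset consists of all
multiset unions of one cover from each `C_{k-1}(w j)`. -/
theorem stmt_16 {V : Type*} (G : SimpleGraph V) (hG : G.IsTree) (root v : V)
    (k : ℕ) (hk : 1 ≤ k) (ℓ : ℕ) (w : Fin ℓ → V) (hw : Function.Injective w)
    (hchild : ∀ u : V, (G.Adj v u ∧ u ∈ desc G root v) ↔ ∃ j, w j = u) :
    Ck G root k v = Ck G root 0 v ∪
      {R | ∃ f : Fin ℓ → Multiset ℕ,
        (∀ j, f j ∈ Ck G root (k - 1) (w j)) ∧ R = ∑ j, f j} := by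
  classical
  have hadj : ∀ j, G.Adj (w j) v := fun j => ((hchild (w j)).2 ⟨j, rfl⟩).1.symm
  have hdesc : ∀ j, w j ∈ desc G root v := fun j => ((hchild (w j)).2 ⟨j, rfl⟩).2
  ext R
  simp only [Ck, Set.mem_union, Set.mem_setOf_eq]
  constructor
  · rintro ⟨A, hA, hcov⟩
    rcases hA with rfl | ⟨hvA, hAD, hAconn, hAdist⟩
    · exact Or.inl ⟨∅, Or.inl rfl, hcov⟩
    · right
      set P : Fin ℓ → Set V := fun j => desc G root (w j) \ A with hP
      have hset : desc G root v \ A = ⋃ j, P j := by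
        ext x
        simp only [hP, Set.mem_diff, Set.mem_iUnion]
        constructor
        · rintro ⟨hxD, hxA⟩
          have hxv : x ≠ v := fun h => hxA (h ▸ hvA)
          obtain ⟨c, hc1, hc2, hc3⟩ := exists_child hG hxD hxv
          obtain ⟨j, rfl⟩ := (hchild c).1 ⟨hc1.symm, hc2⟩
          exact ⟨j, ⟨hc3, hxA⟩⟩
        · rintro ⟨j, hx1, hx2⟩
          exact ⟨desc_trans hx1 (hdesc j), hx2⟩
      have hPdisj : Pairwise fun i j => Disjoint (P i) (P j) := by
        intro i j hij
        exact ((children_disjoint hG (hadj i) (hdesc i) (hadj j) (hdesc j)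
          (hw.ne hij)).mono (Set.diff_subset) (Set.diff_subset))
      have hloc : ∀ B : Set V, B ⊆ desc G root v \ A → B.Nonempty →
          (G.induce B).Connected → ∃ j, B ⊆ P j := by
        intro B hBsub hBne hBconn
        obtain ⟨u0, hu0⟩ := hBne
        obtain ⟨hu0D, hu0A⟩ := hBsub hu0
        have hu0v : u0 ≠ v := fun h => hu0A (h ▸ hvA)
        obtain ⟨c, hc1, hc2, hc3⟩ := exists_child hG hu0D hu0v
        obtain ⟨j, rfl⟩ := (hchild c).1 ⟨hc1.symm, hc2⟩
        refine ⟨j, fun z hz => ⟨?_, (hBsub hz).2⟩⟩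
        obtain ⟨p, hp⟩ := ((induce_connected_iff (G := G)).1 hBconn).2 u0 hu0 z hz
        have hvp : v ∉ p.support := fun h => (hBsub (hp v h)).2 hvA
        exact walk_confine hG (hadj j) (hdesc j) p hc3 hvp z p.end_mem_support
      obtain ⟨f, hf, hsum⟩ := coverOf_split hcov hset hPdisj hloc
      refine ⟨f, fun j => ?_, hsum⟩
      have hPj : P j = desc G root (w j) \ (A ∩ desc G root (w j)) := by
        simp [hP, Set.diff_inter_self_eq_diff]
      refine ⟨A ∩ desc G root (w j), ?_, by rw [← hPj]; exact hf j⟩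
      rcases Set.eq_empty_or_nonempty (A ∩ desc G root (w j)) with he | hne
      · exact Or.inl he
      · right
        obtain ⟨u0, hu0A, hu0D⟩ := hne
        have hu0v : u0 ≠ v := fun h =>
          v_not_mem_child hG (hadj j) (hdesc j) (h ▸ hu0D)
        have hwjA : w j ∈ A := by
          obtain ⟨p, hp⟩ := ((induce_connected_iff (G := G)).1 hAconn).2 u0 hu0A v hvA
          have := walk_cross hG (hadj j) (hdesc j) p hu0D
            (v_not_mem_child hG (hadj j) (hdesc j))
          exact hp _ this
        have hconn : (G.induce (A ∩ desc G root (w j))).Connected := by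
          rw [induce_connected_iff]
          refine ⟨⟨u0, hu0A, hu0D⟩, fun x hx y hy => ?_⟩
          obtain ⟨p, hp⟩ := ((induce_connected_iff (G := G)).1 hAconn).2 x hx.1 y hy.1
          refine ⟨p.bypass, fun z hz => ?_⟩
          have hzA : z ∈ A := hp z (p.support_bypass_subset hz)
          have hvb : v ∉ p.bypass.support :=
            path_avoid hG (hadj j) (hdesc j) p.bypass p.bypass_isPath hx.2 hy.2
          exact ⟨hzA, walk_confine hG (hadj j) (hdesc j) p.bypass hx.2 hvb z hz⟩
        refine ⟨⟨hwjA, mem_desc_self (w j)⟩, Set.inter_subset_right, hconn, ?_⟩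
        intro u hu
        have h1 := hAdist u hu.1
        have h2 := dist_child hG (hadj j) (hdesc j) hu.2
        omega
  · rintro (⟨A, hA, hcov⟩ | ⟨f, hf, rfl⟩)
    · rcases hA with rfl | ⟨hvA, _, _, hd⟩
      · exact ⟨∅, Or.inl rfl, hcov⟩
      · exact absurd (hd v hvA) (by simp)
    · choose A hA hcov using hf
      have hAsub : ∀ j, A j ⊆ desc G root (w j) := by
        intro j
        rcases hA j with h | h
        · rw [h]; exact Set.empty_subset _
        · exact h.2.1
      set AA : Set V := insert v (⋃ j, A j) with hAA
      have hvAA : v ∈ AA := Set.mem_insert _ _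
      have hAAsub : AA ⊆ desc G root v := by
        intro x hx
        rcases hx with rfl | hx
        · exact mem_desc_self x
        · obtain ⟨j, hj⟩ := Set.mem_iUnion.1 hx
          exact desc_trans (hAsub j hj) (hdesc j)
      have hwalkv : ∀ x ∈ AA, ∃ p : G.Walk x v, ∀ z ∈ p.support, z ∈ AA := by
        intro x hx
        rcases hx with rfl | hx
        · exact ⟨Walk.nil, by simp [hvAA]⟩
        · obtain ⟨j, hj⟩ := Set.mem_iUnion.1 hx
          rcases hA j with h | h
          · rw [h] at hj; exact absurd hj (Set.notMem_empty x)
          · obtain ⟨q, hq⟩ := ((induce_connected_iff (G := G)).1 h.2.2.1).2 x hj (w j) h.1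
            refine ⟨q.append (Walk.cons (hadj j) Walk.nil), fun z hz => ?_⟩
            rw [Walk.mem_support_append_iff] at hz
            rcases hz with hz | hz
            · exact Set.mem_insert_iff.2 (Or.inr (Set.mem_iUnion.2 ⟨j, hq z hz⟩))
            · rw [Walk.support_cons, Walk.support_nil] at hz
              rcases List.mem_cons.1 hz with rfl | hz
              · exact Set.mem_insert_iff.2 (Or.inr (Set.mem_iUnion.2 ⟨j, h.1⟩))
              · rw [List.mem_singleton] at hz
                subst hz
                exact hvAA
      have hAAconn : (G.induce AA).Connected := by
        rw [induce_connected_iff]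
        refine ⟨⟨v, hvAA⟩, fun x hx y hy => ?_⟩
        obtain ⟨p, hp⟩ := hwalkv x hx
        obtain ⟨q, hq⟩ := hwalkv y hy
        refine ⟨p.append q.reverse, fun z hz => ?_⟩
        rw [Walk.mem_support_append_iff] at hz
        rcases hz with hz | hz
        · exact hp z hz
        · rw [Walk.support_reverse, List.mem_reverse] at hz
          exact hq z hz
      have hAAdist : ∀ u ∈ AA, G.dist v u < k := by
        intro u hu
        rcases hu with rfl | hu
        · simp [G.dist_self]; omega
        · obtain ⟨j, hj⟩ := Set.mem_iUnion.1 hu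
          rcases hA j with h | h
          · rw [h] at hj; exact absurd hj (Set.notMem_empty u)
          · have h1 := h.2.2.2 u hj
            have h2 := dist_child hG (hadj j) (hdesc j) (hAsub j hj)
            omega
      refine ⟨AA, Or.inr ⟨hvAA, hAAsub, hAAconn, hAAdist⟩, ?_⟩
      have hset : desc G root v \ AA = ⋃ j, (desc G root (w j) \ A j) := by
        ext x
        simp only [Set.mem_diff, Set.mem_iUnion]
        constructor
        · rintro ⟨hxD, hxA⟩
          have hxv : x ≠ v := fun h => hxA (h ▸ hvAA)
          obtain ⟨c, hc1, hc2, hc3⟩ := exists_child hG hxD hxv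
          obtain ⟨j, rfl⟩ := (hchild c).1 ⟨hc1.symm, hc2⟩
          refine ⟨j, hc3, fun hxj => hxA ?_⟩
          exact Set.mem_insert_iff.2 (Or.inr (Set.mem_iUnion.2 ⟨j, hxj⟩))
        · rintro ⟨j, hx1, hx2⟩
          refine ⟨desc_trans hx1 (hdesc j), ?_⟩
          intro hx
          rcases hx with rfl | hx
          · exact v_not_mem_child hG (hadj j) (hdesc j) hx1
          · obtain ⟨i, hi⟩ := Set.mem_iUnion.1 hx
            rcases eq_or_ne i j with rfl | hij
            · exact hx2 hi
            · exact Set.disjoint_left.1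
                (children_disjoint hG (hadj i) (hdesc i) (hadj j) (hdesc j) (hw.ne hij))
                (hAsub i hi) hx1
      rw [hset]
      apply coverOf_combine
      · intro i j hij
        exact ((children_disjoint hG (hadj i) (hdesc i) (hadj j) (hdesc j)
          (hw.ne hij)).mono (Set.diff_subset) (Set.diff_subset))
      · exact hcov
end

section
/- Let G' be obtained from G by the domination-reduction construction with parameter d ≥ 1 (subdividing each edge into a path of length 2d and attaching to each original vertex a pendant path of length d ending at a copy vertex). Then for any vertex u of G' there exists v ∈ V(G) with d_{G'}(u, v) ≤ d, and for any v, w ∈ V(G), d_{G'}(v, w) = 2d · d_G(v, w). -/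
/-- Vertex "names" for the domination-reduction graph `G'`: original vertices `V`,
internal vertices `(a, b, k)` of the length-`2d` path replacing an edge `ab` of `G`
(at position `k+1 ∈ {1, ..., 2d-1}` from `a`), and vertices `(w, j)` of the pendant
path of length `d` attached to `w` (at position `j+1 ∈ {1, ..., d}`; the copy `w'` of
`w` is `(w, d-1)`). -/
def DomVert (V : Type*) (d : ℕ) : Type _ :=
  V ⊕ (V × V × Fin (2 * d - 1)) ⊕ (V × Fin d)

/-- Only names corresponding to actual edges of `G` (oriented increasingly) are valid. -/
def domValid {V : Type*} [LT V] (G : SimpleGraph V) (d : ℕ) : DomVert V d → Prop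
  | .inl _ => True
  | .inr (.inl (a, b, _)) => G.Adj a b ∧ a < b
  | .inr (.inr _) => True

/-- The adjacency generating relation of `G'`: consecutive vertices along the subdivided
edges and along the pendant paths. -/
def domRel {V : Type*} [LT V] (G : SimpleGraph V) (d : ℕ) : DomVert V d → DomVert V d → Prop
  | .inl v, .inr (.inl (a, b, k)) =>
      G.Adj a b ∧ a < b ∧ ((v = a ∧ (k : ℕ) = 0) ∨ (v = b ∧ (k : ℕ) = 2 * d - 2))
  | .inr (.inl (a, b, k)), .inr (.inl (a', b', k')) =>
      a = a' ∧ b = b' ∧ G.Adj a b ∧ a < b ∧ ((k : ℕ) + 1 = (k' : ℕ) ∨ (k' : ℕ) + 1 = (k : ℕ))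
  | .inl v, .inr (.inr (w, j)) => v = w ∧ (j : ℕ) = 0
  | .inr (.inr (w, j)), .inr (.inr (w', j')) =>
      w = w' ∧ ((j : ℕ) + 1 = (j' : ℕ) ∨ (j' : ℕ) + 1 = (j : ℕ))
  | _, _ => False

/-- The domination-reduction graph `G'`: each edge of `G` is replaced by a path of length
`2d` and each vertex `v` of `G` is joined to its copy `v'` by a path of length `d`. -/
def domGraph {V : Type*} [LinearOrder V] (G : SimpleGraph V) (d : ℕ) :
    SimpleGraph {x : DomVert V d // domValid G d x} :=
  SimpleGraph.fromRel fun x y => domRel G d x.1 y.1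

/-- The original vertex `v ∈ V` as a vertex of `G'`. -/
def domOrig {V : Type*} [LinearOrder V] (G : SimpleGraph V) (d : ℕ) (v : V) :
    {x : DomVert V d // domValid G d x} :=
  ⟨.inl v, trivial⟩

-- auxiliary development
namespace DomAux

open SimpleGraph

lemma chain_walk {W : Type*} (H : SimpleGraph W) (f : ℕ → W) :
    ∀ n, (∀ i, i < n → H.Adj (f i) (f (i + 1))) → ∃ p : H.Walk (f 0) (f n), p.length = n := by
  intro n
  induction n with
  | zero => exact fun _ => ⟨.nil, rfl⟩
  | succ n ih =>
    intro h
    obtain ⟨p, hp⟩ := ih fun i hi => h i (by omega)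
    exact ⟨p.concat (h n (by omega)), by simp [SimpleGraph.Walk.length_concat, hp]⟩

variable {V : Type*} [LinearOrder V] (G : SimpleGraph V) (d : ℕ)

def gadget {a b : V} (hab : G.Adj a b) (hlt : a < b) (i : ℕ) :
    {x : DomVert V d // domValid G d x} :=
  if h : 0 < i ∧ i < 2 * d then ⟨.inr (.inl (a, b, ⟨i - 1, by omega⟩)), ⟨hab, hlt⟩⟩
  else if i = 0 then domOrig G d a else domOrig G d b

variable {a b : V} (hab : G.Adj a b) (hlt : a < b)

lemma gadget_zero : gadget G d hab hlt 0 = domOrig G d a := by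
  unfold gadget; rw [dif_neg (show ¬((0:ℕ) < 0 ∧ 0 < 2 * d) by omega), if_pos rfl]

lemma gadget_top (hd : 0 < d) {i : ℕ} (hi : 2 * d ≤ i) :
    gadget G d hab hlt i = domOrig G d b := by
  unfold gadget
  rw [dif_neg (show ¬(0 < i ∧ i < 2 * d) by omega), if_neg (show ¬ i = 0 by omega)]

lemma gadget_mid {i : ℕ} (h : 0 < i ∧ i < 2 * d) :
    gadget G d hab hlt i = ⟨.inr (.inl (a, b, ⟨i - 1, by omega⟩)), ⟨hab, hlt⟩⟩ := by
  unfold gadget; rw [dif_pos h]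

lemma gadget_adj {i : ℕ} (hi : i < 2 * d) :
    (domGraph G d).Adj (gadget G d hab hlt i) (gadget G d hab hlt (i + 1)) := by
  rw [domGraph, SimpleGraph.fromRel_adj]
  rcases Nat.eq_zero_or_pos i with h0 | hpos
  · subst h0
    rw [gadget_zero, gadget_mid G d hab hlt (by omega)]
    refine ⟨fun h => by injection congrArg Subtype.val h, Or.inl ?_⟩
    exact ⟨hab, hlt, Or.inl ⟨rfl, rfl⟩⟩
  · rcases Nat.lt_or_ge (i + 1) (2 * d) with htop | htop
    · rw [gadget_mid G d hab hlt ⟨hpos, hi⟩, gadget_mid G d hab hlt ⟨by omega, htop⟩]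
      refine ⟨?_, Or.inl ⟨rfl, rfl, hab, hlt, Or.inl (show i - 1 + 1 = i + 1 - 1 by omega)⟩⟩
      intro h
      replace h := congrArg Subtype.val h
      injection h with h
      injection h with h
      rw [Prod.mk.injEq, Prod.mk.injEq, Fin.mk.injEq] at h
      omega
    · rw [gadget_mid G d hab hlt ⟨hpos, hi⟩, gadget_top G d hab hlt (by omega) htop]
      refine ⟨fun h => by injection congrArg Subtype.val h, Or.inr ?_⟩
      exact ⟨hab, hlt, Or.inr ⟨rfl, show i - 1 = 2 * d - 2 by omega⟩⟩

def pgad (v : V) (i : ℕ) : {x : DomVert V d // domValid G d x} :=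
  if h : 0 < i ∧ i ≤ d then ⟨.inr (.inr (v, ⟨i - 1, by omega⟩)), trivial⟩ else domOrig G d v

lemma pgad_zero (v : V) : pgad G d v 0 = domOrig G d v := by
  unfold pgad; rw [dif_neg (show ¬((0:ℕ) < 0 ∧ 0 ≤ d) by omega)]

lemma pgad_mid (v : V) {i : ℕ} (h : 0 < i ∧ i ≤ d) :
    pgad G d v i = ⟨.inr (.inr (v, ⟨i - 1, by omega⟩)), trivial⟩ := by
  unfold pgad; rw [dif_pos h]

lemma pgad_adj (v : V) {i : ℕ} (hi : i < d) :
    (domGraph G d).Adj (pgad G d v i) (pgad G d v (i + 1)) := by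
  rw [domGraph, SimpleGraph.fromRel_adj]
  rcases Nat.eq_zero_or_pos i with h0 | hpos
  · subst h0
    rw [pgad_zero, pgad_mid G d v (by omega)]
    exact ⟨fun h => by injection congrArg Subtype.val h, Or.inl ⟨rfl, rfl⟩⟩
  · rw [pgad_mid G d v ⟨hpos, by omega⟩, pgad_mid G d v ⟨by omega, by omega⟩]
    refine ⟨?_, Or.inl ⟨rfl, Or.inl (show i - 1 + 1 = i + 1 - 1 by omega)⟩⟩
    intro h
    replace h := congrArg Subtype.val h
    injection h with h
    injection h with h
    rw [Prod.mk.injEq, Fin.mk.injEq] at h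
    omega

noncomputable def pot (w : V) : DomVert V d → ℕ
  | .inl v => 2 * d * G.dist v w
  | .inr (.inl (p, q, k)) =>
      min (2 * d * G.dist p w + ((k : ℕ) + 1)) (2 * d * G.dist q w + (2 * d - ((k : ℕ) + 1)))
  | .inr (.inr (v, j)) => 2 * d * G.dist v w + ((j : ℕ) + 1)

lemma key {p q : V} (hpq : G.Adj p q) (w : V) : G.dist p w ≤ G.dist q w + 1 := by
  by_cases hr : G.Reachable q w
  · obtain ⟨pth, hpth⟩ := hr.exists_walk_length_eq_dist
    have h := SimpleGraph.dist_le (SimpleGraph.Walk.cons hpq pth)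
    rw [SimpleGraph.Walk.length_cons, hpth] at h
    exact h
  · have hra : ¬ G.Reachable p w := fun h => hr (hpq.symm.reachable.trans h)
    rw [SimpleGraph.dist_eq_zero_of_not_reachable hra]
    omega

lemma key2 {p q : V} (hpq : G.Adj p q) (w : V) :
    2 * d * G.dist p w ≤ 2 * d * G.dist q w + 2 * d := by
  have h := key G hpq w
  calc 2 * d * G.dist p w ≤ 2 * d * (G.dist q w + 1) := Nat.mul_le_mul_left _ h
    _ = 2 * d * G.dist q w + 2 * d := by ring

lemma lip (w : V) (x y : DomVert V d) (hxy : domRel G d x y) :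
    pot G d w y ≤ pot G d w x + 1 ∧ pot G d w x ≤ pot G d w y + 1 := by
  rcases x with v | ⟨p, q, k⟩ | ⟨v, j⟩ <;> rcases y with v' | ⟨p', q', k'⟩ | ⟨v', j'⟩ <;>
    simp only [domRel, pot] at hxy ⊢
  all_goals try exact hxy.elim
  · -- inl v ~ interior (p', q', k')
    obtain ⟨hpq, hlt, hor⟩ := hxy
    have h1 := key2 G d hpq w
    have h2 := key2 G d hpq.symm w
    have hk' : (k' : ℕ) < 2 * d - 1 := k'.isLt
    rcases hor with ⟨hv, hk⟩ | ⟨hv, hk⟩ <;> subst hv <;> rw [hk] <;> omega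
  · -- inl v ~ pendant
    obtain ⟨hv, hj⟩ := hxy
    subst hv; rw [hj]; omega
  · -- interior ~ interior
    obtain ⟨hp, hq, hpq, hlt, hor⟩ := hxy
    subst hp; subst hq
    have hk : (k : ℕ) < 2 * d - 1 := k.isLt
    have hk' : (k' : ℕ) < 2 * d - 1 := k'.isLt
    omega
  · -- pendant ~ pendant
    obtain ⟨hv, hor⟩ := hxy
    subst hv; omega

lemma pot_walk (w : V) {x y : {x : DomVert V d // domValid G d x}}
    (p : (domGraph G d).Walk x y) : pot G d w x.1 ≤ pot G d w y.1 + p.length := by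
  induction p with
  | nil => simp
  | @cons x z y h p ih =>
    rw [domGraph, SimpleGraph.fromRel_adj] at h
    rw [SimpleGraph.Walk.length_cons]
    rcases h.2 with h' | h'
    · have := (lip G d w _ _ h').2
      omega
    · have := (lip G d w _ _ h').1
      omega

def proj : DomVert V d → V
  | .inl v => v
  | .inr (.inl (p, _, _)) => p
  | .inr (.inr (v, _)) => v

lemma rel_proj {x y : DomVert V d} (hxy : domRel G d x y) :
    G.Reachable (proj d x) (proj d y) := by
  rcases x with v | ⟨p, q, k⟩ | ⟨v, j⟩ <;> rcases y with v' | ⟨p', q', k'⟩ | ⟨v', j'⟩ <;>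
    simp only [domRel, proj] at hxy ⊢
  · obtain ⟨hpq, hlt, hor⟩ := hxy
    rcases hor with ⟨hv, _⟩ | ⟨hv, _⟩
    · exact hv ▸ SimpleGraph.Reachable.refl _
    · exact hv ▸ hpq.reachable.symm
  · exact hxy.1 ▸ SimpleGraph.Reachable.refl _
  · exact hxy.1 ▸ SimpleGraph.Reachable.refl _
  · exact hxy.1 ▸ SimpleGraph.Reachable.refl _

lemma walk_proj {x y : {x : DomVert V d // domValid G d x}}
    (p : (domGraph G d).Walk x y) : G.Reachable (proj d x.1) (proj d y.1) := by
  induction p with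
  | nil => exact SimpleGraph.Reachable.refl _
  | @cons x z y h p ih =>
    refine SimpleGraph.Reachable.trans ?_ ih
    rw [domGraph, SimpleGraph.fromRel_adj] at h
    rcases h.2 with h' | h'
    · exact rel_proj G d h'
    · exact (rel_proj G d h').symm

lemma edge_walk (hd : 0 < d) {v u : V} (hvu : G.Adj v u) :
    ∃ q : (domGraph G d).Walk (domOrig G d v) (domOrig G d u), q.length = 2 * d := by
  rcases lt_trichotomy v u with hlt | heq | hlt
  · obtain ⟨p, hp⟩ := chain_walk (domGraph G d) (gadget G d hvu hlt) (2 * d)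
      (fun i hi => gadget_adj G d hvu hlt hi)
    exact ⟨p.copy (gadget_zero G d hvu hlt) (gadget_top G d hvu hlt hd le_rfl),
      by rw [SimpleGraph.Walk.length_copy, hp]⟩
  · exact absurd heq hvu.ne
  · obtain ⟨p, hp⟩ := chain_walk (domGraph G d) (gadget G d hvu.symm hlt) (2 * d)
      (fun i hi => gadget_adj G d hvu.symm hlt hi)
    exact ⟨(p.copy (gadget_zero G d hvu.symm hlt)
        (gadget_top G d hvu.symm hlt hd le_rfl)).reverse,
      by rw [SimpleGraph.Walk.length_reverse, SimpleGraph.Walk.length_copy, hp]⟩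

lemma big_walk (hd : 0 < d) {v w : V} (p : G.Walk v w) :
    ∃ q : (domGraph G d).Walk (domOrig G d v) (domOrig G d w), q.length = 2 * d * p.length := by
  induction p with
  | nil => exact ⟨.nil, by simp⟩
  | @cons v u w h p ih =>
    obtain ⟨q1, hq1⟩ := edge_walk G d hd h
    obtain ⟨q2, hq2⟩ := ih
    exact ⟨q1.append q2, by rw [SimpleGraph.Walk.length_append, hq1, hq2,
      SimpleGraph.Walk.length_cons]; ring⟩

end DomAux


open DomAux

/-- in `G'`, every vertex is within distance `d` of an original vertex of
`G`, and distances between original vertices are exactly `2d` times their `G`-distances. -/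
theorem stmt_18 {V : Type*} [LinearOrder V] (G : SimpleGraph V) (d : ℕ) (hd : 0 < d) :
    (∀ u : {x : DomVert V d // domValid G d x}, ∃ v : V,
        (domGraph G d).dist u (domOrig G d v) ≤ d) ∧
    (∀ v w : V, (domGraph G d).dist (domOrig G d v) (domOrig G d w) = 2 * d * G.dist v w) := by
  constructor
  · rintro ⟨x, hx⟩
    rcases x with v | ⟨a, b, k⟩ | ⟨v, j⟩
    · refine ⟨v, ?_⟩
      rw [show (⟨.inl v, hx⟩ : {x : DomVert V d // domValid G d x}) = domOrig G d v from rfl,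
        SimpleGraph.dist_self]
      omega
    · have hx' : G.Adj a b ∧ a < b := hx
      obtain ⟨hab, hlt⟩ := hx'
      have hk : (k : ℕ) < 2 * d - 1 := k.isLt
      have hmid : gadget G d hab hlt ((k : ℕ) + 1) =
          ⟨.inr (.inl (a, b, k)), hx⟩ := by
        rw [gadget_mid G d hab hlt ⟨by omega, by omega⟩]
        exact Subtype.ext rfl
      rcases le_or_gt ((k : ℕ) + 1) d with hle | hgt
      · -- walk back to a
        have hadj : ∀ i, i < (k : ℕ) + 1 → (domGraph G d).Adj
            (gadget G d hab hlt ((k : ℕ) + 1 - i)) (gadget G d hab hlt ((k : ℕ) + 1 - (i + 1))) := by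
          intro i hi
          have h1 : (k : ℕ) + 1 - i = ((k : ℕ) - i) + 1 := by omega
          have h2 : (k : ℕ) + 1 - (i + 1) = (k : ℕ) - i := by omega
          rw [h1, h2]
          exact (gadget_adj G d hab hlt (by omega)).symm
        obtain ⟨p, hp⟩ := chain_walk (domGraph G d)
          (fun i => gadget G d hab hlt ((k : ℕ) + 1 - i)) ((k : ℕ) + 1) hadj
        refine ⟨a, ?_⟩
        have hstart : gadget G d hab hlt ((k : ℕ) + 1 - 0) = ⟨.inr (.inl (a, b, k)), hx⟩ := hmid
        have hend : gadget G d hab hlt ((k : ℕ) + 1 - ((k : ℕ) + 1)) = domOrig G d a := by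
          rw [show (k : ℕ) + 1 - ((k : ℕ) + 1) = 0 by omega, gadget_zero]
        have hdd := SimpleGraph.dist_le (p.copy hstart hend)
        rw [SimpleGraph.Walk.length_copy, hp] at hdd
        omega
      · -- walk forward to b
        have hadj : ∀ i, i < 2 * d - 1 - (k : ℕ) → (domGraph G d).Adj
            (gadget G d hab hlt ((k : ℕ) + 1 + i)) (gadget G d hab hlt ((k : ℕ) + 1 + (i + 1))) :=
          fun i hi => gadget_adj G d hab hlt (by omega)
        obtain ⟨p, hp⟩ := chain_walk (domGraph G d)
          (fun i => gadget G d hab hlt ((k : ℕ) + 1 + i)) (2 * d - 1 - (k : ℕ)) hadj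
        refine ⟨b, ?_⟩
        have hstart : gadget G d hab hlt ((k : ℕ) + 1 + 0) = ⟨.inr (.inl (a, b, k)), hx⟩ := by
          rw [Nat.add_zero, hmid]
        have hend : gadget G d hab hlt ((k : ℕ) + 1 + (2 * d - 1 - (k : ℕ))) = domOrig G d b := by
          rw [show (k : ℕ) + 1 + (2 * d - 1 - (k : ℕ)) = 2 * d by omega,
            gadget_top G d hab hlt hd le_rfl]
        have hdd := SimpleGraph.dist_le (p.copy hstart hend)
        rw [SimpleGraph.Walk.length_copy, hp] at hdd
        omega
    · have hj : (j : ℕ) < d := j.isLt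
      have hadj : ∀ i, i < (j : ℕ) + 1 → (domGraph G d).Adj
          (pgad G d v ((j : ℕ) + 1 - i)) (pgad G d v ((j : ℕ) + 1 - (i + 1))) := by
        intro i hi
        have h1 : (j : ℕ) + 1 - i = ((j : ℕ) - i) + 1 := by omega
        have h2 : (j : ℕ) + 1 - (i + 1) = (j : ℕ) - i := by omega
        rw [h1, h2]
        exact (pgad_adj G d v (by omega)).symm
      obtain ⟨p, hp⟩ := chain_walk (domGraph G d)
        (fun i => pgad G d v ((j : ℕ) + 1 - i)) ((j : ℕ) + 1) hadj
      refine ⟨v, ?_⟩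
      have hmid : pgad G d v ((j : ℕ) + 1 - 0) = ⟨.inr (.inr (v, j)), hx⟩ := by
        rw [show (j : ℕ) + 1 - 0 = (j : ℕ) + 1 from rfl, pgad_mid G d v ⟨by omega, by omega⟩]
        exact Subtype.ext rfl
      have hend : pgad G d v ((j : ℕ) + 1 - ((j : ℕ) + 1)) = domOrig G d v := by
        rw [show (j : ℕ) + 1 - ((j : ℕ) + 1) = 0 by omega, pgad_zero]
      have hdd := SimpleGraph.dist_le (p.copy hmid hend)
      rw [SimpleGraph.Walk.length_copy, hp] at hdd
      omega
  · intro v w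
    by_cases hr : G.Reachable v w
    · obtain ⟨p, hp⟩ := hr.exists_walk_length_eq_dist
      obtain ⟨q, hq⟩ := big_walk G d hd p
      have up : (domGraph G d).dist (domOrig G d v) (domOrig G d w) ≤ 2 * d * G.dist v w := by
        have h := SimpleGraph.dist_le q
        rw [hq, hp] at h
        exact h
      obtain ⟨r, hrl⟩ := q.reachable.exists_walk_length_eq_dist
      have low : 2 * d * G.dist v w ≤ 2 * d * G.dist w w + r.length := pot_walk G d w r
      rw [SimpleGraph.dist_self, Nat.mul_zero, Nat.zero_add, hrl] at low
      omega
    · rw [SimpleGraph.dist_eq_zero_of_not_reachable hr, Nat.mul_zero]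
      refine SimpleGraph.dist_eq_zero_of_not_reachable fun h => hr ?_
      obtain ⟨r⟩ := h
      exact walk_proj G d r
end
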